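/- Let α(y) = 1/√(1-y²) on the open unit disk Ω. Then the vector field B₃ with components B₃¹ = (3/4)√(1-y²) arcsin y + y(x² - (3/4)y² + 5/4), B₃² = 2x(1-y²), B₃³ = √(1-y²)(x² - (1/4)y²) - (3/4)y arcsin y, satisfies curl B₃ + α B₃ = 0 on Ω. -/

import Mathlib

noncomputable def pdx (f : ℝ × ℝ → ℝ) (p : ℝ × ℝ) : ℝ := fderiv ℝ f p (1, 0)
noncomputable def pdy (f : ℝ × ℝ → ℝ) (p : ℝ × ℝ) : ℝ := fderiv ℝ f p (0, 1)

/-- the open unit disk in the (x,y)-plane -/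
def unitDisk : Set (ℝ × ℝ) := {p : ℝ × ℝ | p.1 ^ 2 + p.2 ^ 2 < 1}

/-!
Each component is a one-variable computation. At a point where a field is differentiable,
its partial derivatives are the ordinary derivatives along the coordinate lines, and on the
disk `√(1 - y²)` and `arcsin y` have derivatives `-y / √(1 - y²)` and `1 / √(1 - y²)`.
After clearing the denominator `s = √(1 - y²)`, each component becomes a polynomial identity
in `x`, `y`, `s`, `arcsin y` that holds modulo `s² = 1 - y²`.
-/

open Real

theorem pdx_eq_of_hasDerivAt {f : ℝ × ℝ → ℝ} {p : ℝ × ℝ} {d : ℝ}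
    (hf : DifferentiableAt ℝ f p) (hd : HasDerivAt (fun x => f (x, p.2)) d p.1) :
    pdx f p = d := by
  have hline : HasDerivAt (fun x : ℝ => (x, p.2)) (1, 0) p.1 :=
    (hasDerivAt_id p.1).prodMk (hasDerivAt_const p.1 p.2)
  exact (hf.hasFDerivAt.comp_hasDerivAt_of_eq p.1 hline rfl).unique hd

theorem pdy_eq_of_hasDerivAt {f : ℝ × ℝ → ℝ} {p : ℝ × ℝ} {d : ℝ}
    (hf : DifferentiableAt ℝ f p) (hd : HasDerivAt (fun y => f (p.1, y)) d p.2) :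
    pdy f p = d := by
  have hline : HasDerivAt (fun y : ℝ => (p.1, y)) (0, 1) p.2 :=
    (hasDerivAt_const p.2 p.1).prodMk (hasDerivAt_id p.2)
  exact (hf.hasFDerivAt.comp_hasDerivAt_of_eq p.2 hline rfl).unique hd

theorem hasDerivAt_sqrt_one_sub_sq {y : ℝ} (hy : y ^ 2 < 1) :
    HasDerivAt (fun t => √(1 - t ^ 2)) (-y / √(1 - y ^ 2)) y := by
  convert ((hasDerivAt_pow 2 y).const_sub 1).sqrt (by linarith) using 1
  field_simp
  ring

theorem sqrt_one_sub_sq_ne_zero {y : ℝ} (hy : y ^ 2 < 1) : √(1 - y ^ 2) ≠ 0 :=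
  (sqrt_pos.2 (by linarith)).ne'

theorem hasDerivAt_arcsin_of_sq_lt_one {y : ℝ} (hy : y ^ 2 < 1) :
    HasDerivAt arcsin (1 / √(1 - y ^ 2)) y :=
  hasDerivAt_arcsin (by nlinarith) (by nlinarith)

theorem sq_snd_lt_one_of_mem_unitDisk {p : ℝ × ℝ} (hp : p ∈ unitDisk) : p.2 ^ 2 < 1 := by
  have : p.1 ^ 2 + p.2 ^ 2 < 1 := hp
  nlinarith [sq_nonneg p.1]

theorem differentiableAt_sqrt_one_sub_sq_snd {p : ℝ × ℝ} (hp : p.2 ^ 2 < 1) :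
    DifferentiableAt ℝ (fun q : ℝ × ℝ => √(1 - q.2 ^ 2)) p :=
  (hasDerivAt_sqrt_one_sub_sq hp).differentiableAt.comp p differentiableAt_snd

theorem differentiableAt_arcsin_snd {p : ℝ × ℝ} (hp : p.2 ^ 2 < 1) :
    DifferentiableAt ℝ (fun q : ℝ × ℝ => arcsin q.2) p :=
  (hasDerivAt_arcsin_of_sq_lt_one hp).differentiableAt.comp p differentiableAt_snd

namespace Beltrami

noncomputable def α (p : ℝ × ℝ) : ℝ := 1 / √(1 - p.2 ^ 2)

noncomputable def B₁ (p : ℝ × ℝ) : ℝ :=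
  3 / 4 * √(1 - p.2 ^ 2) * arcsin p.2 + p.2 * (p.1 ^ 2 - 3 / 4 * p.2 ^ 2 + 5 / 4)

def B₂ (p : ℝ × ℝ) : ℝ := 2 * p.1 * (1 - p.2 ^ 2)

noncomputable def B₃ (p : ℝ × ℝ) : ℝ :=
  √(1 - p.2 ^ 2) * (p.1 ^ 2 - 1 / 4 * p.2 ^ 2) - 3 / 4 * p.2 * arcsin p.2

variable {p : ℝ × ℝ} {x y : ℝ}

theorem differentiableAt_B₁ (hp : p.2 ^ 2 < 1) : DifferentiableAt ℝ B₁ p := by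
  have := differentiableAt_sqrt_one_sub_sq_snd hp
  have := differentiableAt_arcsin_snd hp
  unfold B₁
  fun_prop

theorem differentiable_B₂ : Differentiable ℝ B₂ := by
  unfold B₂
  fun_prop

theorem differentiableAt_B₃ (hp : p.2 ^ 2 < 1) : DifferentiableAt ℝ B₃ p := by
  have := differentiableAt_sqrt_one_sub_sq_snd hp
  have := differentiableAt_arcsin_snd hp
  unfold B₃
  fun_prop

theorem hasDerivAt_B₂_fst : HasDerivAt (fun x => B₂ (x, y)) (2 * (1 - y ^ 2)) x := by
  simpa [B₂] using ((hasDerivAt_id x).const_mul 2).mul_const (1 - y ^ 2)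

theorem hasDerivAt_B₃_fst : HasDerivAt (fun x => B₃ (x, y)) (2 * x * √(1 - y ^ 2)) x :=
  ((((hasDerivAt_pow 2 x).sub_const (1 / 4 * y ^ 2)).const_mul √(1 - y ^ 2)).sub_const
    (3 / 4 * y * arcsin y)).congr_deriv (by ring)

theorem hasDerivAt_B₁_snd (hy : y ^ 2 < 1) :
    HasDerivAt (fun y => B₁ (x, y))
      (-3 / 4 * y * arcsin y / √(1 - y ^ 2) + x ^ 2 - 9 / 4 * y ^ 2 + 2) y := by
  have hs := sqrt_one_sub_sq_ne_zero hy
  refine ((((hasDerivAt_sqrt_one_sub_sq hy).const_mul (3 / 4)).fun_mul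
    (hasDerivAt_arcsin_of_sq_lt_one hy)).fun_add ((hasDerivAt_id' y).fun_mul
    ((((hasDerivAt_pow 2 y).const_mul (3 / 4)).const_sub (x ^ 2)).add_const (5 / 4)))).congr_deriv
    ?_
  field_simp
  ring

theorem hasDerivAt_B₃_snd (hy : y ^ 2 < 1) :
    HasDerivAt (fun y => B₃ (x, y))
      (-y * (x ^ 2 - y ^ 2 / 4 + 3 / 4) / √(1 - y ^ 2) - y / 2 * √(1 - y ^ 2)
        - 3 / 4 * arcsin y) y := by
  have hs := sqrt_one_sub_sq_ne_zero hy
  refine (((hasDerivAt_sqrt_one_sub_sq hy).fun_mul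
    (((hasDerivAt_pow 2 y).const_mul (1 / 4)).const_sub (x ^ 2))).fun_sub
    (((hasDerivAt_id' y).const_mul (3 / 4)).fun_mul
      (hasDerivAt_arcsin_of_sq_lt_one hy))).congr_deriv ?_
  field_simp
  ring

theorem pdy_B₃_add_α_mul_B₁ (hp : p ∈ unitDisk) : pdy B₃ p + α p * B₁ p = 0 := by
  have hy := sq_snd_lt_one_of_mem_unitDisk hp
  have hs := sqrt_one_sub_sq_ne_zero hy
  have hs2 : √(1 - p.2 ^ 2) ^ 2 = 1 - p.2 ^ 2 := sq_sqrt (by linarith)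
  rw [pdy_eq_of_hasDerivAt (differentiableAt_B₃ hy) (hasDerivAt_B₃_snd hy)]
  unfold α B₁
  field_simp
  linear_combination (-4 * p.2) * hs2

theorem neg_pdx_B₃_add_α_mul_B₂ (hp : p ∈ unitDisk) : -pdx B₃ p + α p * B₂ p = 0 := by
  have hy := sq_snd_lt_one_of_mem_unitDisk hp
  have hs := sqrt_one_sub_sq_ne_zero hy
  have hs2 : √(1 - p.2 ^ 2) ^ 2 = 1 - p.2 ^ 2 := sq_sqrt (by linarith)
  rw [pdx_eq_of_hasDerivAt (differentiableAt_B₃ hy) hasDerivAt_B₃_fst]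
  unfold α B₂
  field_simp
  linear_combination (-2 * p.1) * hs2

theorem pdx_B₂_sub_pdy_B₁_add_α_mul_B₃ (hp : p ∈ unitDisk) :
    pdx B₂ p - pdy B₁ p + α p * B₃ p = 0 := by
  have hy := sq_snd_lt_one_of_mem_unitDisk hp
  have hs := sqrt_one_sub_sq_ne_zero hy
  rw [pdx_eq_of_hasDerivAt differentiable_B₂.differentiableAt hasDerivAt_B₂_fst,
    pdy_eq_of_hasDerivAt (differentiableAt_B₁ hy) (hasDerivAt_B₁_snd hy)]
  unfold α B₃
  field_simp
  ring

end Beltrami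

theorem stmt10 (α B₁ B₂ B₃ : ℝ × ℝ → ℝ)
    (hα : ∀ p : ℝ × ℝ, α p = 1 / Real.sqrt (1 - p.2 ^ 2))
    (hB₁ : ∀ p : ℝ × ℝ, B₁ p = (3 / 4) * Real.sqrt (1 - p.2 ^ 2) * Real.arcsin p.2 + p.2 * (p.1 ^ 2 - (3 / 4) * p.2 ^ 2 + 5 / 4))
    (hB₂ : ∀ p : ℝ × ℝ, B₂ p = 2 * p.1 * (1 - p.2 ^ 2))
    (hB₃ : ∀ p : ℝ × ℝ, B₃ p = Real.sqrt (1 - p.2 ^ 2) * (p.1 ^ 2 - (1 / 4) * p.2 ^ 2) - (3 / 4) * p.2 * Real.arcsin p.2) :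
    ∀ p ∈ unitDisk,
      pdy B₃ p + α p * B₁ p = 0 ∧
      -pdx B₃ p + α p * B₂ p = 0 ∧
      pdx B₂ p - pdy B₁ p + α p * B₃ p = 0 := by
  obtain rfl : α = Beltrami.α := funext hα
  obtain rfl : B₁ = Beltrami.B₁ := funext hB₁
  obtain rfl : B₂ = Beltrami.B₂ := funext hB₂
  obtain rfl : B₃ = Beltrami.B₃ := funext hB₃
  exact fun p hp =>
    ⟨Beltrami.pdy_B₃_add_α_mul_B₁ hp, Beltrami.neg_pdx_B₃_add_α_mul_B₂ hp,
      Beltrami.pdx_B₂_sub_pdy_B₁_add_α_mul_B₃ hp⟩
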